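/- arXiv:2404.04380 — 3 statements merged into one kernel-verified Lean document; each statement's English description precedes it below -/
import Mathlib

section
/- Let M be the minimal generating set of a monomial ideal with a total order ≻, let σ ⊆ M, and let m ∈ M be a gap of σ that is not a true gap of σ. Let m' be a non-true-gap witness of m in σ, i.e., m' ≺ m, m' is a bridge of σ∪{m}, and m' is not a bridge of σ. Then there exist a variable x and an integer n ≥ 1 such that the exponent of x in m and the exponent of x in m' both equal n, while the exponent of x in every element of σ∖{m'} is strictly less than n (i.e., m and m' share the factor x^n unique within σ). -/
open scoped Classical

noncomputable section

namespace ChauHaMaithani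

variable {V : Type*}

/-- The lcm of a finite set of monomials (exponent vectors): pointwise maximum. -/
def mlcm (σ : Finset (V → ℕ)) : V → ℕ := fun v => σ.sup fun g => g v

/-- `m` is a bridge of `σ`: `m ∈ σ` and dropping `m` does not change the lcm. -/
def IsBridge (σ : Finset (V → ℕ)) (m : V → ℕ) : Prop :=
  m ∈ σ ∧ mlcm (σ.erase m) = mlcm σ

/-- `m` is a gap of `σ`: `m ∉ σ` and adding `m` does not change the lcm. -/
def IsGap (σ : Finset (V → ℕ)) (m : V → ℕ) : Prop :=
  m ∉ σ ∧ mlcm (insert m σ) = mlcm σ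

/-- A total order `≻` on monomials is encoded by a ranking function `ord`:
`m ≻ m'` iff `ord m' < ord m` (injectivity on the generating set is assumed separately).
`m` is a true gap of `σ` if it is a gap and every bridge of `σ ∪ {m}` dominated by `m`
is already a bridge of `σ`. -/
def IsTrueGap (ord : (V → ℕ) → ℕ) (σ : Finset (V → ℕ)) (m : V → ℕ) : Prop :=
  IsGap σ m ∧ ∀ m', IsBridge (insert m σ) m' → ord m' < ord m → IsBridge σ m'

/-- `σ` is type-1: it has a true gap (in `M`) dominating none of its bridges. -/
def Type1 (M : Finset (V → ℕ)) (ord : (V → ℕ) → ℕ) (σ : Finset (V → ℕ)) : Prop :=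
  ∃ m ∈ M, IsTrueGap ord σ m ∧ ∀ b, IsBridge σ b → ¬ ord b < ord m

/-- `σ` is potentially-type-2: it has a bridge dominating none of its true gaps. -/
def PotType2 (M : Finset (V → ℕ)) (ord : (V → ℕ) → ℕ) (σ : Finset (V → ℕ)) : Prop :=
  ∃ b, IsBridge σ b ∧ ∀ m ∈ M, IsTrueGap ord σ m → ¬ ord m < ord b

/-- `b` is the `≻`-smallest bridge of `σ`. -/
def IsSBridge (ord : (V → ℕ) → ℕ) (σ : Finset (V → ℕ)) (b : V → ℕ) : Prop :=
  IsBridge σ b ∧ ∀ b', IsBridge σ b' → ord b ≤ ord b'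

/-- `σ` is type-2. -/
def Type2 (M : Finset (V → ℕ)) (ord : (V → ℕ) → ℕ) (σ : Finset (V → ℕ)) : Prop :=
  PotType2 M ord σ ∧
    ∀ σ' : Finset (V → ℕ), σ' ⊆ M → σ' ≠ σ → PotType2 M ord σ' →
      ∀ b b', IsSBridge ord σ b → IsSBridge ord σ' b' →
        σ'.erase b' = σ.erase b → ord b < ord b'

/-- `M` (the minimal generating set of a monomial ideal) is bridge-friendly w.r.t. `ord`:
every potentially-type-2 subset is type-2. -/
def BridgeFriendlyWrt (M : Finset (V → ℕ)) (ord : (V → ℕ) → ℕ) : Prop :=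
  ∀ σ ⊆ M, PotType2 M ord σ → Type2 M ord σ

/-- `M` is bridge-friendly: bridge-friendly w.r.t. some total order on `M`. -/
def BridgeFriendly (M : Finset (V → ℕ)) : Prop :=
  ∃ ord : (V → ℕ) → ℕ, Set.InjOn ord M ∧ BridgeFriendlyWrt M ord

/-- `σ = {m_1 ≻ ⋯ ≻ m_k} ⊆ M` is Lyubeznik-critical w.r.t. `ord`: there is no `m ∈ M` with
`m_t ≻ m` and `m ∣ lcm(m_1, …, m_t)` for some `1 < t ≤ k`. -/
def LyubCritical (M : Finset (V → ℕ)) (ord : (V → ℕ) → ℕ) (σ : Finset (V → ℕ)) : Prop :=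
  σ ⊆ M ∧ ¬ ∃ m ∈ M, ∃ t ∈ σ, (∃ u ∈ σ, ord t < ord u) ∧ ord m < ord t ∧
      ∀ v, m v ≤ mlcm (σ.filter fun g => ord t ≤ ord g) v

/-- `M` is Lyubeznik: for some total order on `M`, no Lyubeznik-critical subset has a
bridge (equivalently, the associated Lyubeznik resolution is minimal). -/
def IsLyubeznik (M : Finset (V → ℕ)) : Prop :=
  ∃ ord : (V → ℕ) → ℕ, Set.InjOn ord M ∧
    ∀ σ : Finset (V → ℕ), LyubCritical M ord σ → ∀ b, ¬ IsBridge σ b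

/-- The quadratic monomial `xy` attached to an edge `e = {x,y}`. -/
def edgeMon (e : Sym2 V) : V → ℕ := fun v => if v ∈ e then 1 else 0

/-- `mingens(I(G))`: the edge monomials of `G`. -/
def edgeGens [Fintype V] (G : SimpleGraph V) : Finset (V → ℕ) :=
  (Finset.univ.filter fun e : Sym2 V => e ∈ G.edgeSet).image edgeMon

/-- `mingens(I(G)^n)`: the monomials that are products of `n` edges of `G`. -/
def edgePowGens [Fintype V] (G : SimpleGraph V) (n : ℕ) : Finset (V → ℕ) :=
  (Finset.univ.filter fun f : Fin n → Sym2 V => ∀ i, f i ∈ G.edgeSet).image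
    fun f => ∑ i, edgeMon (f i)

/-- A graph is chordal if it contains no induced cycle of length at least 4. -/
def Chordal (G : SimpleGraph V) : Prop :=
  ∀ n, 4 ≤ n → IsEmpty (SimpleGraph.cycleGraph n ↪g G)


/-!
Since `m'` is not a bridge of `σ`, removing it lowers the lcm in some variable `x`: the exponent
`n` of `x` in `lcm σ` is attained by `m'` and by no other element of `σ`. Because `m` is a gap of
`σ` and `m'` a bridge of `σ ∪ {m}`, the lcm of `(σ ∖ {m'}) ∪ {m}` is still `lcm σ`, so `m` must
attain the exponent `n` at `x` as well.
-/

lemma mlcm_insert_apply (a : V → ℕ) (σ : Finset (V → ℕ)) (v : V) :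
    mlcm (insert a σ) v = max (a v) (mlcm σ v) :=
  Finset.sup_insert

lemma le_mlcm_apply {σ : Finset (V → ℕ)} {g : V → ℕ} (hg : g ∈ σ) (v : V) :
    g v ≤ mlcm σ v :=
  Finset.le_sup (f := fun g => g v) hg

lemma apply_eq_of_mlcm_insert_apply_eq {σ : Finset (V → ℕ)} {a : V → ℕ} {x : V} {n : ℕ}
    (h : mlcm (insert a σ) x = n) (hlt : mlcm σ x < n) : a x = n := by
  rw [mlcm_insert_apply] at h
  omega

lemma exists_mlcm_erase_lt_of_not_isBridge {σ : Finset (V → ℕ)} {m : V → ℕ} (hm : m ∈ σ)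
    (h : ¬ IsBridge σ m) : ∃ x, mlcm (σ.erase m) x < mlcm σ x := by
  by_contra! hge
  exact h ⟨hm, funext fun x =>
    le_antisymm (Finset.sup_mono (Finset.erase_subset m σ)) (hge x)⟩

lemma mlcm_insert_erase_of_isGap_of_isBridge {σ : Finset (V → ℕ)} {m m' : V → ℕ}
    (hgap : IsGap σ m) (hbr : IsBridge (insert m σ) m') (hne : m' ≠ m) :
    mlcm (insert m (σ.erase m')) = mlcm σ := by
  rw [← Finset.erase_insert_of_ne hne.symm, hbr.2, hgap.2]

theorem witness_shares_unique_factor_general {V : Type*} (ord : (V → ℕ) → ℕ) (σ : Finset (V → ℕ))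
    (m m' : V → ℕ) (hgap : IsGap σ m)
    (hlt : ord m' < ord m) (hbr : IsBridge (insert m σ) m') (hnbr : ¬ IsBridge σ m') :
    ∃ (x : V) (n : ℕ), 1 ≤ n ∧ m x = n ∧ m' x = n ∧ ∀ g ∈ σ.erase m', g x < n := by
  have hne : m' ≠ m := ne_of_apply_ne ord hlt.ne
  have hm'σ : m' ∈ σ := (Finset.mem_insert.1 hbr.1).resolve_left hne
  obtain ⟨x, hx⟩ := exists_mlcm_erase_lt_of_not_isBridge hm'σ hnbr
  refine ⟨x, mlcm σ x, by omega, ?_, ?_, fun g hg => (le_mlcm_apply hg x).trans_lt hx⟩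
  · exact apply_eq_of_mlcm_insert_apply_eq
      (by rw [mlcm_insert_erase_of_isGap_of_isBridge hgap hbr hne]) hx
  · exact apply_eq_of_mlcm_insert_apply_eq (by rw [Finset.insert_erase hm'σ]) hx

/-- **Proposition 2.10.** If `m` is a gap but not a true gap of `σ`, then `m` and any of
its non-true-gap witnesses `m'` share a factor `x^n` unique within `σ`. -/
theorem witness_shares_unique_factor {V : Type*} (M : Finset (V → ℕ))
    (ord : (V → ℕ) → ℕ) (σ : Finset (V → ℕ)) (hσ : σ ⊆ M) (m m' : V → ℕ) (hm : m ∈ M)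
    (hm' : m' ∈ M) (hgap : IsGap σ m) (hnottrue : ¬ IsTrueGap ord σ m)
    (hlt : ord m' < ord m) (hbr : IsBridge (insert m σ) m') (hnbr : ¬ IsBridge σ m') :
    ∃ (x : V) (n : ℕ), 1 ≤ n ∧ m x = n ∧ m' x = n ∧ ∀ g ∈ σ.erase m', g x < n :=
  witness_shares_unique_factor_general ord σ m m' hgap hlt hbr hnbr

end ChauHaMaithani
end
end

section
/- Let I be a monomial ideal with minimal generating set M, let ≻ be a total order on M, and let m be any monomial. If I is bridge-friendly with respect to ≻, then the HHZ-subideal I^{≤m}, whose minimal generating set is M^{≤m} = {g ∈ M : g divides m}, is bridge-friendly with respect to the restriction of ≻ to M^{≤m}. -/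
open scoped Classical

noncomputable section

namespace ChauHaMaithani

variable {V : Type*}

theorem IsGap.le_mlcm {σ : Finset (V → ℕ)} {g : V → ℕ} (hg : IsGap σ g) (v : V) :
    g v ≤ mlcm σ v := by
  rw [← hg.2]
  exact Finset.le_sup (f := fun g => g v) (Finset.mem_insert_self g σ)

theorem mlcm_le {σ : Finset (V → ℕ)} {m : V → ℕ} (h : ∀ g ∈ σ, ∀ v, g v ≤ m v) (v : V) :
    mlcm σ v ≤ m v :=
  Finset.sup_le fun g hg => h g hg v

theorem IsGap.le_of_forall_le {σ : Finset (V → ℕ)} {g m : V → ℕ} (hg : IsGap σ g)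
    (h : ∀ g ∈ σ, ∀ v, g v ≤ m v) (v : V) : g v ≤ m v :=
  (hg.le_mlcm v).trans (mlcm_le h v)

theorem PotType2.of_subset {M N : Finset (V → ℕ)} {ord : (V → ℕ) → ℕ} {σ : Finset (V → ℕ)}
    (hσ : PotType2 N ord σ) (hgaps : ∀ g ∈ M, IsTrueGap ord σ g → g ∈ N) :
    PotType2 M ord σ := by
  obtain ⟨b, hb, hgap⟩ := hσ
  exact ⟨b, hb, fun g hgM hg => hgap g (hgaps g hgM hg) hg⟩

/-- The type-2 condition relative to `N` quantifies over fewer sets than the one relative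
to `M`. -/
theorem BridgeFriendlyWrt.of_subset {M N : Finset (V → ℕ)} {ord : (V → ℕ) → ℕ}
    (hM : BridgeFriendlyWrt M ord) (hNM : N ⊆ M)
    (hpot : ∀ σ ⊆ N, PotType2 N ord σ → PotType2 M ord σ) : BridgeFriendlyWrt N ord := by
  intro σ hσ hσpot
  have hσtype2 := (hM σ (hσ.trans hNM) (hpot σ hσ hσpot)).2
  exact ⟨hσpot, fun σ' hσ' hne hσ'pot =>
    hσtype2 σ' (hσ'.trans hNM) hne (hpot σ' hσ' hσ'pot)⟩

theorem restriction_bridgeFriendly_general {V : Type*} (M : Finset (V → ℕ))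
    (ord : (V → ℕ) → ℕ) (m : V → ℕ)
    (h : BridgeFriendlyWrt M ord) :
    BridgeFriendlyWrt (M.filter fun g => ∀ v, g v ≤ m v) ord := by
  refine h.of_subset (Finset.filter_subset _ M) fun σ hσ hσpot => hσpot.of_subset ?_
  intro g hgM hg
  refine Finset.mem_filter.mpr ⟨hgM, hg.1.le_of_forall_le fun g' hg' => ?_⟩
  exact (Finset.mem_filter.mp (hσ hg')).2

/-- **Lemma 2.14** (Restriction Lemma for bridge-friendly ideals). If `I` is
bridge-friendly w.r.t. `≻`, then the HHZ-subideal `I^{≤m}` is bridge-friendly w.r.t.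
the restriction of `≻` to `M^{≤m} = {g ∈ M : g ∣ m}`. -/
theorem restriction_bridgeFriendly {V : Type*} (M : Finset (V → ℕ))
    (ord : (V → ℕ) → ℕ) (hinj : Set.InjOn ord M) (m : V → ℕ)
    (h : BridgeFriendlyWrt M ord) :
    BridgeFriendlyWrt (M.filter fun g => ∀ v, g v ≤ m v) ord :=
  restriction_bridgeFriendly_general M ord m h

end ChauHaMaithani
end
end

section
/- Let G be a finite simple graph and fix a total order ≻ on the edge set of G, identified with mingens(I(G)). Then I(G) is not bridge-friendly with respect to ≻ if and only if there exist a type-1 subset τ of the edge set and edges m_1 ≻ m_2 ≻ m_3 such that: m_1 and m_2 are true gaps of τ, neither of which dominates any bridge of τ; the sets τ∪{m_1} and τ∪{m_2} are potentially-type-2; and m_3 ∈ τ is a bridge of τ∪{m_1,m_2}. Moreover, in this situation, writing m_3 = yz for vertices y and z, either m_1 and m_3 are the only edges in τ∪{m_1,m_2} containing y and m_2 and m_3 are the only edges in τ∪{m_1,m_2} containing z, or vice versa (with the roles of m_1 and m_2 exchanged). -/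
open scoped Classical

noncomputable section

namespace ChauHaMaithani

variable {V : Type*}

/-- Vertex type of the graph `L(a,b,c)`: `Sum.inl 0` is `x`, `Sum.inl 1` is `y`,
and the remaining summands are the leaves `x_i`, the leaves `y_j`, and the
triangle tips `z_k`. -/
abbrev LV (a b c : ℕ) := Fin 2 ⊕ (Fin a ⊕ Fin b ⊕ Fin c)

/-- The graph `L(a,b,c)`: `c` triangles glued along the common edge `{x,y}`, with
`a` leaves attached to `x` and `b` leaves attached to `y`. -/
def LGraph (a b c : ℕ) : SimpleGraph (LV a b c) :=
  SimpleGraph.fromRel fun u v =>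
    (u = Sum.inl 0 ∧ v = Sum.inl 1) ∨
    (∃ i, u = Sum.inl 0 ∧ v = Sum.inr (Sum.inl i)) ∨
    (∃ j, u = Sum.inl 1 ∧ v = Sum.inr (Sum.inr (Sum.inl j))) ∨
    (∃ k, (u = Sum.inl 0 ∨ u = Sum.inl 1) ∧ v = Sum.inr (Sum.inr (Sum.inr k)))

/-- The graph `BF(T,w)`: attach `w(e)` new triangles along each edge `e` of `T`. -/
def BFGraph {VT : Type} (T : SimpleGraph VT) (w : T.edgeSet → ℕ) :
    SimpleGraph (VT ⊕ (Σ e : T.edgeSet, Fin (w e))) :=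
  SimpleGraph.fromRel fun u v =>
    (∃ a b, u = Sum.inl a ∧ v = Sum.inl b ∧ T.Adj a b) ∨
    (∃ (a : VT) (e : T.edgeSet) (i : Fin (w e)), u = Sum.inl a ∧ v = Sum.inr ⟨e, i⟩ ∧
      a ∈ (e : Sym2 VT))

/-- The kite graph: the diamond (`K₄` minus the edge `{2,3}`) together with a pendant
vertex `4` attached to the degree-two vertex `2`. -/
def kite : SimpleGraph (Fin 5) :=
  SimpleGraph.fromEdgeSet {s(0,1), s(0,2), s(0,3), s(1,2), s(1,3), s(2,4)}

/-- The gem graph: the path `0-1-2-3` together with a vertex `4` adjacent to all of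
`0,1,2,3`. -/
def gem : SimpleGraph (Fin 5) :=
  SimpleGraph.fromEdgeSet {s(0,1), s(1,2), s(2,3), s(0,4), s(1,4), s(2,4), s(3,4)}

/-- The tadpole graph: the triangle `0,1,2` with a path `0-3-4` of length 2 attached. -/
def tadpole : SimpleGraph (Fin 5) :=
  SimpleGraph.fromEdgeSet {s(0,1), s(1,2), s(0,2), s(0,3), s(3,4)}

/-- The butterfly graph: two triangles `0,1,2` and `0,3,4` sharing the vertex `0`. -/
def butterfly : SimpleGraph (Fin 5) :=
  SimpleGraph.fromEdgeSet {s(0,1), s(1,2), s(0,2), s(0,3), s(3,4), s(0,4)}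

/-- The net graph: the triangle `0,1,2` with pendant vertices `3,4,5` attached to
`0,1,2` respectively. -/
def net : SimpleGraph (Fin 6) :=
  SimpleGraph.fromEdgeSet {s(0,1), s(1,2), s(0,2), s(0,3), s(1,4), s(2,5)}

/-!
If `σ` is potentially-type-2 but not type-2, the offending `σ'` and the smallest bridges
`m₁ ∈ σ`, `m₂ ∈ σ'` give `τ = σ ∖ {m₁} = σ' ∖ {m₂}` with `m₁ ≻ m₂` true gaps of `τ`
dominating no bridge of `τ`; conversely such a configuration violates type-2 for
`τ ∪ {m₁}`. Since `τ ∪ {m₁}` is potentially-type-2 with smallest bridge `m₁ ≻ m₂`, its gap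
`m₂` is not a true gap, which produces a bridge `m₃ ≺ m₂` of `τ ∪ {m₁, m₂}` that is a bridge
of neither `τ ∪ {m₁}` nor `τ ∪ {m₂}`. For an edge `m₃ = yz` this means: some endpoint of `m₃`
lies on no other edge of `τ ∪ {m₁}` but on `m₂`, and some endpoint lies on no other edge of
`τ ∪ {m₂}` but on `m₁`; these endpoints differ because `m₂` does not cover the second.
-/

section Lcm

variable (σ τ : Finset (V → ℕ)) (m : V → ℕ)

theorem mlcm_eq_sup : mlcm σ = σ.sup id := by
  funext v
  rw [Finset.sup_apply]
  rfl

variable {σ τ m}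

theorem le_mlcm (h : m ∈ σ) : m ≤ mlcm σ := by
  rw [mlcm_eq_sup]
  exact Finset.le_sup (f := id) h

theorem mlcm_mono (h : σ ⊆ τ) : mlcm σ ≤ mlcm τ := by
  simp only [mlcm_eq_sup]
  exact Finset.sup_mono h

theorem mlcm_insert [DecidableEq (V → ℕ)] : mlcm (insert m σ) = m ⊔ mlcm σ := by
  simp only [mlcm_eq_sup, Finset.sup_insert, id]

theorem isBridge_iff : IsBridge σ m ↔ m ∈ σ ∧ m ≤ mlcm (σ.erase m) := by
  refine and_congr_right fun hm => ?_
  conv_rhs => rw [← sup_eq_right, ← mlcm_insert, Finset.insert_erase hm]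
  exact eq_comm

theorem isGap_iff : IsGap σ m ↔ m ∉ σ ∧ m ≤ mlcm σ := by
  rw [IsGap, mlcm_insert, sup_eq_right]

end Lcm

section BridgeGap

variable {σ τ : Finset (V → ℕ)} {m b : V → ℕ}

theorem IsBridge.insert (h : IsBridge τ b) (m : V → ℕ) : IsBridge (insert m τ) b := by
  rw [isBridge_iff] at h ⊢
  exact ⟨Finset.mem_insert_of_mem h.1,
    h.2.trans (mlcm_mono (Finset.erase_subset_erase b (Finset.subset_insert m τ)))⟩

theorem IsGap.isBridge_insert (h : IsGap τ m) : IsBridge (insert m τ) m := by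
  rw [isGap_iff] at h
  rw [isBridge_iff]
  refine ⟨Finset.mem_insert_self m τ, h.2.trans (mlcm_mono fun g hg => ?_)⟩
  exact Finset.mem_erase.2 ⟨ne_of_mem_of_not_mem hg h.1, Finset.mem_insert_of_mem hg⟩

theorem IsGap.mono (h : IsGap τ m) (hτσ : τ ⊆ σ) (hm : m ∉ σ) : IsGap σ m := by
  rw [isGap_iff] at h ⊢
  exact ⟨hm, h.2.trans (mlcm_mono hτσ)⟩

theorem IsBridge.isGap_erase (h : IsBridge σ b) : IsGap (σ.erase b) b := by
  rw [isBridge_iff] at h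
  rw [isGap_iff]
  exact ⟨Finset.notMem_erase b σ, h.2⟩

theorem exists_lt_apply_of_not_isBridge (hm : m ∈ σ) (h : ¬ IsBridge σ m) :
    ∃ v, 0 < m v ∧ ∀ g ∈ σ, g ≠ m → g v < m v := by
  rw [isBridge_iff, not_and, Pi.le_def] at h
  push Not at h
  obtain ⟨v, hv⟩ := h hm
  exact ⟨v, (Nat.zero_le _).trans_lt hv,
    fun g hg hgm => (le_mlcm (Finset.mem_erase.2 ⟨hgm, hg⟩) v).trans_lt hv⟩

theorem le_apply_of_isBridge_insert {a : V → ℕ} {v : V}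
    (h : IsBridge (insert a σ) m) (hv : ∀ g ∈ σ, g ≠ m → g v < m v) : m v ≤ a v := by
  by_contra! hlt
  have hlcm : mlcm ((insert a σ).erase m) v < m v := by
    refine (Finset.sup_lt_iff ((Nat.zero_le _).trans_lt hlt)).2 fun g hg => ?_
    obtain ⟨hgm, hg⟩ := Finset.mem_erase.1 hg
    rcases Finset.mem_insert.1 hg with rfl | hg
    exacts [hlt, hv g hg hgm]
  exact hlcm.not_ge (((isBridge_iff.1 h).2) v)

theorem exists_var_of_not_isBridge_of_isBridge_insert {a : V → ℕ}
    (hm : m ∈ σ) (hσ : ¬ IsBridge σ m) (h : IsBridge (insert a σ) m) (hsq : ∀ v, m v ≤ 1) :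
    ∃ v, m v ≠ 0 ∧ a v ≠ 0 ∧ ∀ g ∈ insert a σ, g v ≠ 0 → g = a ∨ g = m := by
  obtain ⟨v, hpos, hlt⟩ := exists_lt_apply_of_not_isBridge hm hσ
  refine ⟨v, hpos.ne', (hpos.trans_le (le_apply_of_isBridge_insert h hlt)).ne',
    fun g hg hgv => ?_⟩
  rcases Finset.mem_insert.1 hg with rfl | hg
  · exact Or.inl rfl
  · by_contra! hne
    have := hlt g hg hne.2
    have := hsq v
    omega

end BridgeGap

section SmallestBridge

variable {M σ τ : Finset (V → ℕ)} {ord : (V → ℕ) → ℕ} {m b : V → ℕ}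

theorem IsSBridge.isTrueGap_erase (h : IsSBridge ord σ b) : IsTrueGap ord (σ.erase b) b := by
  refine ⟨h.1.isGap_erase, fun b' hb' hlt => absurd (h.2 b' ?_) hlt.not_ge⟩
  rwa [Finset.insert_erase h.1.1] at hb'

theorem IsSBridge.not_lt_of_isBridge_erase (h : IsSBridge ord σ b) {b' : V → ℕ}
    (hb' : IsBridge (σ.erase b) b') : ¬ ord b' < ord b := by
  have hσ := hb'.insert b
  rw [Finset.insert_erase h.1.1] at hσ
  exact (h.2 b' hσ).not_gt

theorem IsTrueGap.isSBridge_insert (h : IsTrueGap ord τ m)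
    (hlow : ∀ b, IsBridge τ b → ¬ ord b < ord m) : IsSBridge ord (insert m τ) m :=
  ⟨h.1.isBridge_insert, fun b' hb' => not_lt.1 fun hlt => hlow b' (h.2 b' hb' hlt) hlt⟩

theorem PotType2.not_isTrueGap (h : PotType2 M ord σ) (hb : IsSBridge ord σ b) (hm : m ∈ M)
    (hmb : ord m < ord b) : ¬ IsTrueGap ord σ m := by
  obtain ⟨β, hβ, hβlow⟩ := h
  exact fun htg => hβlow m hm htg (hmb.trans_le (hb.2 β hβ))

end SmallestBridge

theorem not_bridgeFriendlyWrt_iff [DecidableEq (V → ℕ)] {M : Finset (V → ℕ)}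
    {ord : (V → ℕ) → ℕ} (hinj : Set.InjOn ord M) :
    ¬ BridgeFriendlyWrt M ord ↔
      ∃ τ ⊆ M, ∃ m₁ ∈ M, ∃ m₂ ∈ M, ord m₂ < ord m₁ ∧
        IsTrueGap ord τ m₁ ∧ IsTrueGap ord τ m₂ ∧
        (∀ b, IsBridge τ b → ¬ ord b < ord m₁) ∧ (∀ b, IsBridge τ b → ¬ ord b < ord m₂) ∧
        PotType2 M ord (insert m₁ τ) ∧ PotType2 M ord (insert m₂ τ) := by
  -- `IsBridge`, `IsTrueGap` and `Type2` are built with the classical `DecidableEq` instance;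
  -- switching to it lets `Finset.insert_erase` and friends rewrite across both.
  obtain rfl := Subsingleton.elim ‹DecidableEq (V → ℕ)› fun a b => Classical.propDecidable (a = b)
  constructor
  · intro h
    simp only [BridgeFriendlyWrt, Type2] at h
    push Not at h
    obtain ⟨σ, hσM, hpt, hnt⟩ := h
    obtain ⟨σ', hσ'M, hne, hpt', m₁, m₂, hsb₁, hsb₂, herase, hle⟩ := hnt hpt
    have hσ : insert m₁ (σ.erase m₁) = σ := Finset.insert_erase hsb₁.1.1
    have hσ' : insert m₂ (σ.erase m₁) = σ' := herase ▸ Finset.insert_erase hsb₂.1.1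
    have h21 : ord m₂ < ord m₁ := hle.lt_of_ne fun h =>
      hne (by rw [← hσ, ← hσ', hinj (hσ'M hsb₂.1.1) (hσM hsb₁.1.1) h])
    refine ⟨σ.erase m₁, (Finset.erase_subset m₁ σ).trans hσM, m₁, hσM hsb₁.1.1, m₂,
      hσ'M hsb₂.1.1, h21, hsb₁.isTrueGap_erase, herase ▸ hsb₂.isTrueGap_erase,
      fun _ => hsb₁.not_lt_of_isBridge_erase, fun _ => herase ▸ hsb₂.not_lt_of_isBridge_erase,
      by rwa [hσ], by rwa [hσ']⟩
  · rintro ⟨τ, hτ, m₁, hm₁, m₂, hm₂, h21, htg₁, htg₂, hlow₁, hlow₂, hpt₁, hpt₂⟩ hBF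
    have hne : insert m₂ τ ≠ insert m₁ τ := fun h => by
      have hm₂₁ : m₂ ∈ insert m₁ τ := h ▸ Finset.mem_insert_self m₂ τ
      rcases Finset.mem_insert.1 hm₂₁ with rfl | hm₂τ
      exacts [h21.false, htg₂.1.1 hm₂τ]
    have h12 := (hBF _ (Finset.insert_subset hm₁ hτ) hpt₁).2 _ (Finset.insert_subset hm₂ hτ) hne
      hpt₂ m₁ m₂ (htg₁.isSBridge_insert hlow₁) (htg₂.isSBridge_insert hlow₂)
      (by rw [Finset.erase_insert htg₂.1.1, Finset.erase_insert htg₁.1.1])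
    exact h12.not_gt h21

theorem exists_isBridge_insert_insert [DecidableEq (V → ℕ)] {M τ : Finset (V → ℕ)}
    {ord : (V → ℕ) → ℕ} {m₁ m₂ : V → ℕ} (hm₂ : m₂ ∈ M) (h21 : ord m₂ < ord m₁)
    (htg₁ : IsTrueGap ord τ m₁) (htg₂ : IsTrueGap ord τ m₂)
    (hlow₁ : ∀ b, IsBridge τ b → ¬ ord b < ord m₁) (hlow₂ : ∀ b, IsBridge τ b → ¬ ord b < ord m₂)
    (hpt₁ : PotType2 M ord (insert m₁ τ)) :
    ∃ m₃ ∈ τ, ord m₃ < ord m₂ ∧ IsBridge (insert m₁ (insert m₂ τ)) m₃ ∧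
      ¬ IsBridge (insert m₁ τ) m₃ ∧ ¬ IsBridge (insert m₂ τ) m₃ := by
  obtain rfl := Subsingleton.elim ‹DecidableEq (V → ℕ)› fun a b => Classical.propDecidable (a = b)
  have hsb₁ := htg₁.isSBridge_insert hlow₁
  have hgap : IsGap (insert m₁ τ) m₂ := htg₂.1.mono (Finset.subset_insert m₁ τ) <| by
    simp only [Finset.mem_insert, not_or]
    exact ⟨fun h => h21.ne (congrArg ord h), htg₂.1.1⟩
  have hntg := hpt₁.not_isTrueGap hsb₁ hm₂ h21
  simp only [IsTrueGap, hgap, true_and, not_forall] at hntg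
  obtain ⟨m₃, hbr, h32, hnbr₁⟩ := hntg
  have hm₃ : m₃ ∈ τ := by
    rcases Finset.mem_insert.1 hbr.1 with rfl | hm₃
    · exact absurd h32 (lt_irrefl _)
    rcases Finset.mem_insert.1 hm₃ with rfl | hm₃
    exacts [absurd (h32.trans h21) (lt_irrefl _), hm₃]
  exact ⟨m₃, hm₃, h32, Finset.insert_comm m₂ m₁ τ ▸ hbr, hnbr₁,
    fun h => ((htg₂.isSBridge_insert hlow₂).2 m₃ h).not_gt h32⟩

theorem edgeMon_ne_zero_iff {e : Sym2 V} {v : V} : edgeMon e v ≠ 0 ↔ v ∈ e := by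
  simp [edgeMon]

theorem edgeMon_le_one (e : Sym2 V) (v : V) : edgeMon e v ≤ 1 := by
  unfold edgeMon
  split_ifs <;> simp

theorem exists_adj_of_mem_edgeGens [Fintype V] {G : SimpleGraph V} {m : V → ℕ}
    (h : m ∈ edgeGens G) : ∃ y z, G.Adj y z ∧ m = edgeMon s(y, z) := by
  simp only [edgeGens, Finset.mem_image, Finset.mem_filter, Finset.mem_univ, true_and] at h
  obtain ⟨e, he, rfl⟩ := h
  induction e using Sym2.ind with
  | _ y z => exact ⟨y, z, he, rfl⟩

theorem vertices_of_isBridge_insert_insert [DecidableEq (V → ℕ)] {τ : Finset (V → ℕ)}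
    {m₁ m₂ m₃ : V → ℕ} {y z : V} (hsq : ∀ v, m₃ v ≤ 1) (hsupp : ∀ v, m₃ v ≠ 0 → v = y ∨ v = z)
    (hm₃ : m₃ ∈ τ) (h12 : m₁ ≠ m₂) (h23 : m₂ ≠ m₃) (hbr : IsBridge (insert m₁ (insert m₂ τ)) m₃)
    (hnbr₁ : ¬ IsBridge (insert m₁ τ) m₃) (hnbr₂ : ¬ IsBridge (insert m₂ τ) m₃) :
    ((∀ g ∈ insert m₁ (insert m₂ τ), g y ≠ 0 → g = m₁ ∨ g = m₃) ∧ m₁ y ≠ 0 ∧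
      (∀ g ∈ insert m₁ (insert m₂ τ), g z ≠ 0 → g = m₂ ∨ g = m₃) ∧ m₂ z ≠ 0) ∨
    ((∀ g ∈ insert m₁ (insert m₂ τ), g y ≠ 0 → g = m₂ ∨ g = m₃) ∧ m₂ y ≠ 0 ∧
      (∀ g ∈ insert m₁ (insert m₂ τ), g z ≠ 0 → g = m₁ ∨ g = m₃) ∧ m₁ z ≠ 0) := by
  obtain rfl := Subsingleton.elim ‹DecidableEq (V → ℕ)› fun a b => Classical.propDecidable (a = b)
  have hcomm := Finset.insert_comm m₁ m₂ τ
  obtain ⟨v₁, hv₁, hm₂v₁, honly₁⟩ := exists_var_of_not_isBridge_of_isBridge_insert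
    (Finset.mem_insert_of_mem hm₃) hnbr₁ (hcomm ▸ hbr) hsq
  obtain ⟨v₂, hv₂, hm₁v₂, honly₂⟩ := exists_var_of_not_isBridge_of_isBridge_insert
    (Finset.mem_insert_of_mem hm₃) hnbr₂ hbr hsq
  rw [← hcomm] at honly₁
  have hv : v₁ ≠ v₂ := by
    rintro rfl
    rcases honly₂ m₂ (by simp) hm₂v₁ with h | h
    exacts [h12 h.symm, h23 h]
  rcases hsupp v₁ hv₁ with rfl | rfl <;> rcases hsupp v₂ hv₂ with rfl | rfl
  · exact absurd rfl hv
  · exact Or.inr ⟨honly₁, hm₂v₁, honly₂, hm₁v₂⟩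
  · exact Or.inl ⟨honly₂, hm₁v₂, honly₁, hm₂v₁⟩
  · exact absurd rfl hv

/-- **Proposition 4.1.** For a graph `G` with a total order on its edge monomials,
`I(G)` is not bridge-friendly w.r.t. the order iff there exist a type-1 set `τ` and
edges `m₁ ≻ m₂ ≻ m₃` as in Lemma 2.8 with `m₃ ∈ τ` a bridge of `τ ∪ {m₁, m₂}`, and
moreover, writing `m₃ = yz`, either `m₁, m₃` are the only edges of `τ ∪ {m₁, m₂}`
containing `y` and `m₂, m₃` the only ones containing `z`, or vice versa. -/
theorem edgeIdeal_not_bridgeFriendly_iff {V : Type} [Fintype V] (G : SimpleGraph V)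
    (ord : (V → ℕ) → ℕ) (hinj : Set.InjOn ord (edgeGens G)) :
    ¬ BridgeFriendlyWrt (edgeGens G) ord ↔
      ∃ τ ⊆ edgeGens G, ∃ m₁ ∈ edgeGens G, ∃ m₂ ∈ edgeGens G, ∃ m₃ ∈ τ,
        Type1 (edgeGens G) ord τ ∧
        ord m₂ < ord m₁ ∧ ord m₃ < ord m₂ ∧
        IsTrueGap ord τ m₁ ∧ IsTrueGap ord τ m₂ ∧
        (∀ b, IsBridge τ b → ¬ ord b < ord m₁) ∧
        (∀ b, IsBridge τ b → ¬ ord b < ord m₂) ∧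
        PotType2 (edgeGens G) ord (insert m₁ τ) ∧
        PotType2 (edgeGens G) ord (insert m₂ τ) ∧
        IsBridge (insert m₁ (insert m₂ τ)) m₃ ∧
        (∃ y z : V, G.Adj y z ∧ m₃ = edgeMon s(y, z) ∧
          (((∀ g ∈ insert m₁ (insert m₂ τ), g y ≠ 0 → g = m₁ ∨ g = m₃) ∧ m₁ y ≠ 0 ∧
            (∀ g ∈ insert m₁ (insert m₂ τ), g z ≠ 0 → g = m₂ ∨ g = m₃) ∧ m₂ z ≠ 0) ∨
           ((∀ g ∈ insert m₁ (insert m₂ τ), g y ≠ 0 → g = m₂ ∨ g = m₃) ∧ m₂ y ≠ 0 ∧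
            (∀ g ∈ insert m₁ (insert m₂ τ), g z ≠ 0 → g = m₁ ∨ g = m₃) ∧ m₁ z ≠ 0))) := by
  rw [not_bridgeFriendlyWrt_iff hinj]
  constructor
  · rintro ⟨τ, hτ, m₁, hm₁, m₂, hm₂, h21, htg₁, htg₂, hlow₁, hlow₂, hpt₁, hpt₂⟩
    obtain ⟨m₃, hm₃, h32, hbr, hnbr₁, hnbr₂⟩ :=
      exists_isBridge_insert_insert hm₂ h21 htg₁ htg₂ hlow₁ hlow₂ hpt₁
    obtain ⟨y, z, hyz, rfl⟩ := exists_adj_of_mem_edgeGens (hτ hm₃)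
    have hsupp : ∀ v, edgeMon s(y, z) v ≠ 0 → v = y ∨ v = z := fun v hv =>
      Sym2.mem_iff.1 (edgeMon_ne_zero_iff.1 hv)
    exact ⟨τ, hτ, m₁, hm₁, m₂, hm₂, _, hm₃, ⟨m₂, hm₂, htg₂, hlow₂⟩, h21, h32, htg₁, htg₂,
      hlow₁, hlow₂, hpt₁, hpt₂, hbr, y, z, hyz, rfl,
      vertices_of_isBridge_insert_insert (edgeMon_le_one _) hsupp hm₃
        (fun h => h21.ne' (congrArg ord h)) (fun h => h32.ne' (congrArg ord h)) hbr hnbr₁ hnbr₂⟩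
  · rintro ⟨τ, hτ, m₁, hm₁, m₂, hm₂, -, -, -, h21, -, htg₁, htg₂, hlow₁, hlow₂, hpt₁, hpt₂, -⟩
    exact ⟨τ, hτ, m₁, hm₁, m₂, hm₂, h21, htg₁, htg₂, hlow₁, hlow₂, hpt₁, hpt₂⟩

end ChauHaMaithani
end
end
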